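/- arXiv:1605.00619 — 3 statements merged into one kernel-verified Lean document; each statement's English description precedes it below -/
import Mathlib

section
/- For even N and k ≤ N/2, the number of 2-to-1 functions f : [N] → [N] satisfying f(i_1)=y_1, ..., f(i_k)=y_k, where i_1 < ... < i_k are distinct indices and y_1, ..., y_k are distinct values, equals C(N−k, N/2−k) · C(N−k, k) · k! · (N−2k)!/2^(N/2−k). -/
/-- A function `f : Fin N → Fin N` is 2-to-1 if every element of its image
has exactly two preimages. -/
def TwoToOne {N : ℕ} (f : Fin N → Fin N) : Prop :=
  ∀ y : Fin N, (∃ x, f x = y) → (Finset.univ.filter fun x => f x = y).card = 2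

/-!
A map `F : α → γ` all of whose fibres have `r = |ι|` elements is `Prod.fst ∘ w` for exactly
`(r!)^|γ|` bijections `w : α ≃ γ × ι`, one for each labelling of the fibres by `ι`. Prescribing
`F (u j) = v j` for `j ∈ κ` prescribes `w (u j)` up to the `r^|κ|` choices of its second
coordinate, and then `w` is any bijection between the remaining `|α| - |κ|` points on each side.
For 2-to-1 maps `[N] → [N]` with a given image `s ⊇ {y_j}` of size `N/2` this gives
`(N - k)! / 2^(N/2 - k)` maps; there are `C(N - k, N/2 - k)` such images, and
`C(N - k, k) k! (N - 2k)! = (N - k)!`.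
-/

open Function Finset
open scoped Nat

theorem Nat.card_eq_card_mul_of_card_fiber {X B : Type*} [Finite X] [Fintype B] (g : X → B)
    {c : ℕ} (h : ∀ b, Nat.card {x // g x = b} = c) : Nat.card X = Nat.card B * c := by
  rw [Nat.card_congr (Equiv.sigmaFiberEquiv g).symm, Nat.card_sigma]
  simp [h]

def HasFiberCard {α γ : Type*} (F : α → γ) (r : ℕ) : Prop :=
  ∀ z, Nat.card {x // F x = z} = r

theorem card_equiv_extending {α β κ : Type*} [Fintype α] [Fintype β] [Fintype κ]
    {u : κ → α} {v : κ → β} (hu : Injective u) (hv : Injective v)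
    (hcard : Fintype.card α = Fintype.card β) :
    Nat.card {e : α ≃ β // ∀ j, e (u j) = v j} = (Fintype.card α - Fintype.card κ)! := by
  classical
  let e₀ : Set.range u ≃ Set.range v :=
    (Equiv.ofInjective u hu).symm.trans (Equiv.ofInjective v hv)
  have hext : {e : α ≃ β // ∀ j, e (u j) = v j} ≃
      {e : α ≃ β // ∀ x : Set.range u, e x = e₀ x} :=
    Equiv.subtypeEquivRight fun e => by
      rw [Set.forall_subtype_range_iff]
      simp [e₀]
  rw [Nat.card_congr (hext.trans (Equiv.Set.compl e₀)), Nat.card_eq_fintype_card,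
    Fintype.card_equiv (Fintype.equivOfCardEq ?_)] <;>
  simp only [Fintype.card_compl_set, Set.card_range_of_injective hu,
    Set.card_range_of_injective hv, hcard]

theorem card_equiv_prod_extending_fst {α γ ι κ : Type*} [Fintype α] [Fintype γ] [Fintype ι]
    [Fintype κ] {u : κ → α} {v : κ → γ} (hu : Injective u) (hv : Injective v)
    (hcard : Fintype.card α = Fintype.card γ * Fintype.card ι) :
    Nat.card {w : α ≃ γ × ι // ∀ j, (w (u j)).1 = v j} =
      Fintype.card ι ^ Fintype.card κ * (Fintype.card α - Fintype.card κ)! := by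
  classical
  let snd (w : {w : α ≃ γ × ι // ∀ j, (w (u j)).1 = v j}) (j : κ) : ι := (w.1 (u j)).2
  have hfiber (c : κ → ι) :
      Nat.card {w // snd w = c} = (Fintype.card α - Fintype.card κ)! := by
    have e : {w // snd w = c} ≃ {w : α ≃ γ × ι // ∀ j, w (u j) = (v j, c j)} :=
      (Equiv.subtypeSubtypeEquivSubtypeInter (fun w : α ≃ γ × ι => ∀ j, (w (u j)).1 = v j)
        (fun w => (fun j => (w (u j)).2) = c)).trans <| Equiv.subtypeEquivRight fun w => by
          simp [funext_iff, Prod.ext_iff, forall_and]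
    rw [Nat.card_congr e]
    exact card_equiv_extending hu (fun a b h => hv (congrArg Prod.fst h))
      (by rw [hcard, Fintype.card_prod])
  rw [Nat.card_eq_card_mul_of_card_fiber snd hfiber, Nat.card_eq_fintype_card, Fintype.card_fun]

theorem hasFiberCard_fst_equiv {α γ ι : Type*} [Fintype ι] (w : α ≃ γ × ι) :
    HasFiberCard (fun x => (w x).1) (Fintype.card ι) := by
  intro z
  let e : {p : γ × ι // p.1 = z} ≃ ι :=
    { toFun := fun p => p.1.2
      invFun := fun i => ⟨(z, i), rfl⟩
      left_inv := by rintro ⟨⟨_, i⟩, rfl⟩; rfl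
      right_inv := fun _ => rfl }
  rw [Nat.card_congr ((w.subtypeEquiv (q := fun p => p.1 = z) fun x => Iff.rfl).trans e),
    Nat.card_eq_fintype_card]

def equivProdOverEquivPiFiber {α γ ι : Type*} (F : α → γ) :
    {w : α ≃ γ × ι // ∀ x, (w x).1 = F x} ≃ ∀ z : γ, ({x // F x = z} ≃ ι) where
  toFun w z :=
    { toFun := fun x => (w.1 x.1).2
      invFun := fun b => ⟨w.1.symm (z, b), by simpa using (w.2 (w.1.symm (z, b))).symm⟩
      left_inv := fun x => by
        ext
        simp [Equiv.symm_apply_eq, Prod.ext_iff, w.2 x.1, x.2]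
      right_inv := fun b => by simp }
  invFun h := ⟨(Equiv.sigmaFiberEquiv F).symm.trans
      ((Equiv.sigmaCongrRight h).trans (Equiv.sigmaEquivProd γ ι)), fun x => rfl⟩
  left_inv := by
    rintro ⟨w, hw⟩
    ext x
    · exact (hw x).symm
    · rfl
  right_inv h := by
    funext z
    ext ⟨x, rfl⟩
    rfl

theorem card_equiv_prod_over {α γ ι : Type*} [Fintype α] [Fintype γ] [Fintype ι] {F : α → γ}
    (hF : HasFiberCard F (Fintype.card ι)) :
    Nat.card {w : α ≃ γ × ι // ∀ x, (w x).1 = F x} = (Fintype.card ι)! ^ Fintype.card γ := by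
  have hlabel (z : γ) : Nat.card ({x // F x = z} ≃ ι) = (Fintype.card ι)! := by
    obtain ⟨e⟩ := Finite.card_eq.mp ((hF z).trans Nat.card_eq_fintype_card.symm)
    rw [Nat.card_congr (e.equivCongr (Equiv.refl ι)), ← Nat.card_eq_fintype_card]
    exact Nat.card_perm
  rw [Nat.card_congr (equivProdOverEquivPiFiber F), Nat.card_pi]
  simp [hlabel]

theorem card_hasFiberCard_mul_factorial_pow {α γ ι : Type*} [Fintype α] [Fintype γ] [Fintype ι]
    (P : (α → γ) → Prop) :
    Nat.card {F : α → γ // HasFiberCard F (Fintype.card ι) ∧ P F} *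
      (Fintype.card ι)! ^ Fintype.card γ = Nat.card {w : α ≃ γ × ι // P fun x => (w x).1} := by
  classical
  let proj (w : {w : α ≃ γ × ι // P fun x => (w x).1}) :
      {F : α → γ // HasFiberCard F (Fintype.card ι) ∧ P F} :=
    ⟨fun x => (w.1 x).1, hasFiberCard_fst_equiv w.1, w.2⟩
  have hfiber (F) : Nat.card {w // proj w = F} = (Fintype.card ι)! ^ Fintype.card γ := by
    rw [← card_equiv_prod_over F.2.1]
    refine Nat.card_congr <| (Equiv.subtypeEquivRight fun w => ?_).trans
      (Equiv.subtypeSubtypeEquivSubtype fun {w} h => ?_)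
    · simp [proj, Subtype.ext_iff, funext_iff]
    · simpa [show (fun x => (w x).1) = F.1 from funext h] using F.2.2
  rw [Nat.card_eq_card_mul_of_card_fiber proj hfiber, mul_comm]

theorem card_hasFiberCard_extending_mul {α γ ι κ : Type*} [Fintype α] [Fintype γ] [Fintype ι]
    [Fintype κ] {u : κ → α} {v : κ → γ} (hu : Injective u) (hv : Injective v)
    (hcard : Fintype.card α = Fintype.card γ * Fintype.card ι) :
    Nat.card {F : α → γ // HasFiberCard F (Fintype.card ι) ∧ ∀ j, F (u j) = v j} *
        (Fintype.card ι)! ^ Fintype.card γ =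
      Fintype.card ι ^ Fintype.card κ * (Fintype.card α - Fintype.card κ)! := by
  rw [card_hasFiberCard_mul_factorial_pow, card_equiv_prod_extending_fst hu hv hcard]

theorem card_supersets_of_card {α : Type*} [Fintype α] [DecidableEq α] (Y : Finset α) {m : ℕ}
    (hm : #Y ≤ m) :
    Nat.card {s : Finset α // Y ⊆ s ∧ #s = m} = (Fintype.card α - #Y).choose (m - #Y) := by
  rw [Nat.card_eq_fintype_card, Fintype.card_subtype, ← card_compl, ← card_powersetCard]
  refine card_nbij' (· \ Y) (· ∪ Y) (fun s hs => ?_) (fun t ht => ?_) (fun s hs => ?_)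
    (fun t ht => ?_)
  all_goals simp only [coe_filter, mem_coe, mem_univ, true_and, Set.mem_ofPred_eq,
    mem_powersetCard, subset_compl_iff_disjoint_right] at *
  · rw [card_sdiff_of_subset hs.1, hs.2]
    exact ⟨sdiff_disjoint, rfl⟩
  · rw [card_union_of_disjoint ht.1, ht.2]
    exact ⟨subset_union_right, by omega⟩
  · exact sdiff_union_of_subset hs.1
  · exact union_sdiff_cancel_right ht.1

theorem TwoToOne.card_image {N : ℕ} {f : Fin N → Fin N} (hf : TwoToOne f) :
    2 * #(image f univ) = N := by
  have h := card_eq_sum_card_image f univ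
  rw [sum_congr rfl fun z hz => hf z (by simpa using hz), sum_const, smul_eq_mul, card_univ,
    Fintype.card_fin] at h
  omega

theorem twoToOne_val_and_image_iff {N : ℕ} {s : Finset (Fin N)} (F : Fin N → s) :
    TwoToOne (fun x => (F x : Fin N)) ∧ image (fun x => (F x : Fin N)) univ = s ↔
      HasFiberCard F 2 := by
  have hfiber (z : s) : #{x | (F x : Fin N) = z} = Nat.card {x // F x = z} := by
    rw [Nat.card_eq_fintype_card, Fintype.card_subtype]
    simp only [← Subtype.ext_iff]
  constructor
  · rintro ⟨hF, himage⟩ z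
    rw [← hfiber]
    exact hF z (by simpa [← himage] using z.2)
  · intro hF
    refine ⟨fun z ⟨x, hx⟩ => ?_, ?_⟩
    · subst hx
      rw [hfiber, hF]
    · ext z
      simp only [mem_image, mem_univ, true_and]
      refine ⟨fun ⟨x, hx⟩ => hx ▸ (F x).2, fun hz => ?_⟩
      obtain ⟨x, hx⟩ := (Nat.card_pos_iff.mp (by rw [hF ⟨z, hz⟩]; norm_num)).1
      exact ⟨x, congrArg Subtype.val hx⟩

theorem card_twoToOne_extending_image_eq {N k : ℕ} {i : Fin k → Fin N} {y : Fin k → Fin N}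
    (hi : Injective i) (hy : Injective y) {s : Finset (Fin N)} (hs : 2 * #s = N) (hk : k ≤ #s)
    (hys : ∀ j, y j ∈ s) :
    Nat.card {f : Fin N → Fin N // (TwoToOne f ∧ ∀ j, f (i j) = y j) ∧ image f univ = s} *
      2 ^ (#s - k) = (N - k)! := by
  let e : {f : Fin N → Fin N // (TwoToOne f ∧ ∀ j, f (i j) = y j) ∧ image f univ = s} ≃
      {F : Fin N → s // HasFiberCard F 2 ∧ ∀ j, F (i j) = ⟨y j, hys j⟩} :=
    { toFun f := ⟨fun x => ⟨f.1 x, f.2.2.subset (mem_image_of_mem _ (mem_univ x))⟩,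
        (twoToOne_val_and_image_iff _).1 ⟨f.2.1.1, f.2.2⟩, fun j => Subtype.ext (f.2.1.2 j)⟩
      invFun F := ⟨fun x => F.1 x,
        ⟨((twoToOne_val_and_image_iff F.1).2 F.2.1).1, fun j => congrArg Subtype.val (F.2.2 j)⟩,
        ((twoToOne_val_and_image_iff F.1).2 F.2.1).2⟩
      left_inv _ := rfl
      right_inv _ := rfl }
  have h := card_hasFiberCard_extending_mul (ι := Bool) hi (v := fun j => ⟨y j, hys j⟩)
    (fun a b h => hy (congrArg Subtype.val h)) (by simp [← hs, mul_comm])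
  simp only [Fintype.card_bool, Fintype.card_coe, Fintype.card_fin, Nat.factorial_two] at h
  rw [← Nat.card_congr e, ← Nat.sub_add_cancel hk, pow_add, ← mul_assoc, mul_comm (2 ^ k)] at h
  exact Nat.eq_of_mul_eq_mul_right (by positivity) h

theorem card_twoToOne_extending_mul {m k : ℕ} {i y : Fin k → Fin (m + m)} (hi : Injective i)
    (hy : Injective y) (hk : k ≤ m) :
    Nat.card {f : Fin (m + m) → Fin (m + m) // TwoToOne f ∧ ∀ j, f (i j) = y j} * 2 ^ (m - k) =
      (m + m - k).choose (m - k) * (m + m - k)! := by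
  have hY : #(image y univ) = k := by
    rw [card_image_of_injective _ hy, card_univ, Fintype.card_fin]
  let img (f : {f : Fin (m + m) → Fin (m + m) // TwoToOne f ∧ ∀ j, f (i j) = y j}) :
      {s : Finset (Fin (m + m)) // image y univ ⊆ s ∧ #s = m} :=
    ⟨image f.1 univ, fun z hz => by
      obtain ⟨j, -, rfl⟩ := mem_image.mp hz
      exact f.2.2 j ▸ mem_image_of_mem _ (mem_univ _), by have := f.2.1.card_image; omega⟩
  have hfiber (s) : Nat.card {f // img f = s} * 2 ^ (m - k) = (m + m - k)! := by
    have h := card_twoToOne_extending_image_eq hi hy (s := s.1) (by rw [s.2.2]; omega)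
      (by rw [s.2.2]; exact hk) fun j => s.2.1 (mem_image_of_mem _ (mem_univ j))
    rw [s.2.2] at h
    rw [← h, Nat.card_congr ((Equiv.subtypeEquivRight fun f => Subtype.ext_iff).trans
      (Equiv.subtypeSubtypeEquivSubtypeInter _ fun f => image f univ = s.1))]
  rw [Nat.card_congr (Equiv.sigmaFiberEquiv img).symm, Nat.card_sigma, sum_mul]
  simp only [hfiber, sum_const, card_univ, smul_eq_mul]
  rw [← Nat.card_eq_fintype_card, card_supersets_of_card _ (by rw [hY]; exact hk), hY,
    Fintype.card_fin]

theorem stmt1 (N k : ℕ) (hEven : Even N) (hk : k ≤ N / 2)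
    (i : Fin k → Fin N) (hi : StrictMono i)
    (y : Fin k → Fin N) (hy : Function.Injective y) :
    Nat.card {f : Fin N → Fin N // TwoToOne f ∧ ∀ j, f (i j) = y j} =
      (N - k).choose (N / 2 - k) * (N - k).choose k * Nat.factorial k *
        Nat.factorial (N - 2 * k) / 2 ^ (N / 2 - k) := by
  obtain ⟨m, rfl⟩ := hEven
  rw [show (m + m) / 2 = m by omega] at hk ⊢
  have hfactorial : (m + m - k).choose k * k ! * (m + m - 2 * k)! = (m + m - k)! := by
    rw [show m + m - 2 * k = m + m - k - k by omega]
    exact Nat.choose_mul_factorial_mul_factorial (by omega)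
  rw [mul_assoc, mul_assoc, ← mul_assoc _ k !, hfactorial]
  exact (Nat.div_eq_of_eq_mul_left (by positivity)
    (card_twoToOne_extending_mul hi.injective hy hk).symm).symm
end

section
/- For even N, distinct indices i_1,...,i_k ∈ [N] and distinct values y_1,...,y_k ∈ [N] with k ≤ N/2, the probability under the uniform distribution on 2-to-1 functions [N]→[N] that f(i_j)=y_j for all j equals (∏_{i=0}^{k−1} 1/(N−i)) · (∏_{i=0}^{k−1} (N−2i)/(N−i)). -/
/-!
Relabelling the domain by a permutation fixing the constrained points `i j`, or the codomain by
one fixing the prescribed values `y j`, preserves the 2-to-1 maps satisfying the constraints. So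
among the `c` such maps, the number with `f a = b` does not depend on the free point `a` or the
free value `b`, and neither does the number `X` with `f a ∈ {y j}`. Every such map sends exactly
`k` free points into `{y j}`, namely the partners of the `i j`; double counting over the `N - k`
free points gives `(N - k) X = k c`, and the other `c - X` maps are spread evenly over the `N - k`
free values of `f a`. Hence adding the constraint `f a = b` multiplies the count by
`(N - 2k) / (N - k)²`.
-/

open Finset

section

variable {N k : ℕ}

theorem TwoToOne.perm_comp_comp {f : Fin N → Fin N} (hf : TwoToOne f)
    (τ σ : Equiv.Perm (Fin N)) : TwoToOne (τ ∘ f ∘ σ) := by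
  rintro z ⟨x, rfl⟩
  rw [← hf (f (σ x)) ⟨_, rfl⟩]
  exact card_equiv σ fun w => by simp

theorem twoToOne_perm_comp_comp_iff {f : Fin N → Fin N} (τ σ : Equiv.Perm (Fin N)) :
    TwoToOne (τ ∘ f ∘ σ) ↔ TwoToOne f := by
  refine ⟨fun h => ?_, fun h => h.perm_comp_comp τ σ⟩
  convert h.perm_comp_comp τ⁻¹ σ⁻¹
  ext x
  simp

theorem exists_twoToOne (hN : Even N) : ∃ f : Fin N → Fin N, TwoToOne f := by
  obtain ⟨m, rfl⟩ := hN
  refine ⟨fun x => ⟨2 * (x / 2), by omega⟩, ?_⟩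
  rintro _ ⟨x, rfl⟩
  rw [card_eq_two]
  refine ⟨⟨2 * (x / 2), by omega⟩, ⟨2 * (x / 2) + 1, by omega⟩, 
    by simp [Fin.ext_iff], ?_⟩
  ext z
  simp only [mem_filter, mem_univ, true_and, mem_insert, mem_singleton, Fin.ext_iff]
  omega

open Classical in
noncomputable def twoToOneWith (i y : Fin k → Fin N) : Finset (Fin N → Fin N) :=
  {f | TwoToOne f ∧ ∀ j, f (i j) = y j}

variable {i y : Fin k → Fin N}

theorem card_filter_twoToOneWith_perm_comp_comp (τ σ : Equiv.Perm (Fin N))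
    (hτ : ∀ j, τ (y j) = y j) (hσ : ∀ j, σ (i j) = i j)
    (Q : (Fin N → Fin N) → Prop) [DecidablePred Q] :
    #{f ∈ twoToOneWith i y | Q (τ ∘ f ∘ σ)} = #{f ∈ twoToOneWith i y | Q f} := by
  refine card_equiv (Equiv.arrowCongr σ.symm τ) fun f => ?_
  rw [show Equiv.arrowCongr σ.symm τ f = τ ∘ f ∘ σ from rfl]
  have hτ' : ∀ j z, τ z = y j ↔ z = y j := fun j z => by
    conv_lhs => rw [← hτ j]
    exact τ.injective.eq_iff
  simp [twoToOneWith, twoToOne_perm_comp_comp_iff, hσ, hτ']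

theorem card_filter_twoToOneWith_apply_eq_of_notMem {b b' : Fin N} (a : Fin N)
    (hb : b ∉ univ.image y) (hb' : b' ∉ univ.image y) :
    #{f ∈ twoToOneWith i y | f a = b} = #{f ∈ twoToOneWith i y | f a = b'} := by
  convert card_filter_twoToOneWith_perm_comp_comp (i := i) (y := y) (Equiv.swap b b') 1 ?_
    (fun _ => rfl) (fun f => f a = b') using 2
  · simp [Equiv.swap_apply_eq_iff]
  · intro j
    simp only [mem_image, mem_univ, true_and, not_exists] at hb hb'
    exact Equiv.swap_apply_of_ne_of_ne (hb j) (hb' j)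

theorem card_filter_twoToOneWith_apply_mem_eq_of_notMem {a a' : Fin N}
    (ha : a ∉ univ.image i) (ha' : a' ∉ univ.image i) (R : Finset (Fin N)) :
    #{f ∈ twoToOneWith i y | f a ∈ R} = #{f ∈ twoToOneWith i y | f a' ∈ R} := by
  convert card_filter_twoToOneWith_perm_comp_comp (i := i) (y := y) 1 (Equiv.swap a a')
    (fun _ => rfl) ?_ (fun f => f a' ∈ R) using 2
  · simp
  · intro j
    simp only [mem_image, mem_univ, true_and, not_exists] at ha ha'
    exact Equiv.swap_apply_of_ne_of_ne (ha j) (ha' j)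

theorem card_filter_notMem_image_apply_mem_image (hi : Function.Injective i)
    (hy : Function.Injective y) {f : Fin N → Fin N} (hf : f ∈ twoToOneWith i y) :
    #{a ∈ (univ.image i)ᶜ | f a ∈ univ.image y} = k := by
  obtain ⟨hf, hfi⟩ : TwoToOne f ∧ ∀ j, f (i j) = y j := by simpa [twoToOneWith] using hf
  have hpreimage : #{a | f a ∈ univ.image y} = 2 * k := by
    rw [card_eq_sum_card_fiberwise (f := f) (t := univ.image y) (fun a ha => by simpa using ha),
      sum_congr rfl (g := fun _ => 2), sum_const, card_image_of_injective _ hy, smul_eq_mul,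
      mul_comm, card_univ, Fintype.card_fin]
    simp only [mem_image, mem_univ, true_and, forall_exists_index, forall_apply_eq_imp_iff]
    intro j
    rw [filter_filter, ← hf (y j) ⟨i j, hfi j⟩]
    congr 1
    ext a
    simp only [mem_filter, mem_univ, true_and, and_iff_right_iff_imp]
    exact fun h => ⟨j, h.symm⟩
  have hconstrained :
      {a ∈ univ.filter (f · ∈ univ.image y) | a ∈ univ.image i} = univ.image i := by
    ext a
    simp only [mem_filter, mem_univ, true_and, mem_image, and_iff_right_iff_imp]
    rintro ⟨j, rfl⟩
    exact ⟨j, (hfi j).symm⟩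
  have hfree : {a ∈ univ.filter (f · ∈ univ.image y) | a ∉ univ.image i}
      = {a ∈ (univ.image i)ᶜ | f a ∈ univ.image y} := by
    ext a
    simp only [mem_filter, mem_univ, true_and, mem_compl]
    tauto
  have := card_filter_add_card_filter_not (s := univ.filter (f · ∈ univ.image y))
    (· ∈ univ.image i)
  rw [hconstrained, hfree, hpreimage, card_image_of_injective _ hi, card_univ,
    Fintype.card_fin] at this
  omega

theorem sum_card_filter_twoToOneWith_apply_mem_image (hi : Function.Injective i)
    (hy : Function.Injective y) :
    ∑ a ∈ (univ.image i)ᶜ, #{f ∈ twoToOneWith i y | f a ∈ univ.image y}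
      = k * #(twoToOneWith i y) := by
  have := sum_card_bipartiteAbove_eq_sum_card_bipartiteBelow (s := (univ.image i)ᶜ)
    (t := twoToOneWith i y) (fun a f => f a ∈ univ.image y)
  simp only [bipartiteAbove, bipartiteBelow] at this
  rw [this, sum_congr rfl fun f hf => card_filter_notMem_image_apply_mem_image hi hy hf,
    sum_const, smul_eq_mul, mul_comm]

theorem sq_mul_card_filter_twoToOneWith_apply_eq (hi : Function.Injective i)
    (hy : Function.Injective y) {a b : Fin N} (ha : a ∉ univ.image i) (hb : b ∉ univ.image y) :
    ((N : ℝ) - k) ^ 2 * #{f ∈ twoToOneWith i y | f a = b}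
      = ((N : ℝ) - 2 * k) * #(twoToOneWith i y) := by
  have hkN : k ≤ N := by simpa using Fintype.card_le_of_injective i hi
  have hcompl {g : Fin k → Fin N} (hg : Function.Injective g) : #(univ.image g)ᶜ = N - k := by
    rw [card_compl, card_image_of_injective _ hg, Fintype.card_fin, card_univ, Fintype.card_fin]
  have hsplit :=
    card_filter_add_card_filter_not (s := twoToOneWith i y) fun f => f a ∈ univ.image y
  have hout : #{f ∈ twoToOneWith i y | f a ∉ univ.image y}
      = (N - k) * #{f ∈ twoToOneWith i y | f a = b} := by
    rw [card_eq_sum_card_fiberwise (f := (· a)) (t := (univ.image y)ᶜ)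
      (fun f hf => by simpa using (mem_filter.mp hf).2), ← hcompl hy, ← smul_eq_mul,
      ← sum_const]
    refine sum_congr rfl fun b' hb' => ?_
    rw [filter_filter, ← card_filter_twoToOneWith_apply_eq_of_notMem a (mem_compl.mp hb') hb]
    congr 1
    ext f
    simp only [mem_filter, and_congr_right_iff, and_iff_right_iff_imp]
    rintro - rfl
    exact mem_compl.mp hb'
  have hin : (N - k) * #{f ∈ twoToOneWith i y | f a ∈ univ.image y}
      = k * #(twoToOneWith i y) := by
    rw [← sum_card_filter_twoToOneWith_apply_mem_image hi hy, ← hcompl hi, ← smul_eq_mul,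
      ← sum_const]
    exact sum_congr rfl fun a' ha' =>
      card_filter_twoToOneWith_apply_mem_eq_of_notMem ha (mem_compl.mp ha') _
  rw [hout] at hsplit
  have hsplit' := congrArg (Nat.cast (R := ℝ)) hsplit
  have hin' := congrArg (Nat.cast (R := ℝ)) hin
  push_cast [Nat.cast_sub hkN] at hsplit' hin'
  linear_combination ((N : ℝ) - k) * hsplit' - hin'

open Classical in
theorem card_twoToOneWith (hi : Function.Injective i) (hy : Function.Injective y) :
    (#(twoToOneWith i y) : ℝ)
      = #{f : Fin N → Fin N | TwoToOne f} *
          ∏ t ∈ range k, ((N : ℝ) - 2 * t) / ((N : ℝ) - t) ^ 2 := by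
  induction k with
  | zero => simp [twoToOneWith]
  | succ k ih =>
    have hlt : k < N := by simpa using Fintype.card_le_of_injective i hi
    have hNk : (N : ℝ) - k ≠ 0 := sub_ne_zero.mpr (by exact_mod_cast hlt.ne')
    have hsnoc : twoToOneWith i y = {f ∈ twoToOneWith (i ∘ Fin.castSucc) (y ∘ Fin.castSucc) |
        f (i (Fin.last k)) = y (Fin.last k)} := by
      ext f
      simp [twoToOneWith, Fin.forall_fin_succ', and_assoc]
    have hnew {g : Fin (k + 1) → Fin N} (hg : Function.Injective g) :
        g (Fin.last k) ∉ univ.image (g ∘ Fin.castSucc) := by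
      simp [hg.eq_iff, Fin.castSucc_ne_last]
    have hi' := hi.comp (Fin.castSucc_injective k)
    have hy' := hy.comp (Fin.castSucc_injective k)
    have step := sq_mul_card_filter_twoToOneWith_apply_eq hi' hy' (hnew hi) (hnew hy)
    rw [ih hi' hy'] at step
    rw [hsnoc, prod_range_succ, ← mul_assoc]
    field_simp
    linear_combination step

end

theorem stmt3_general (N k : ℕ) (hEven : Even N)
    (i : Fin k → Fin N) (hi : Function.Injective i)
    (y : Fin k → Fin N) (hy : Function.Injective y) :
    (Nat.card {f : Fin N → Fin N // TwoToOne f ∧ ∀ j, f (i j) = y j} : ℝ) /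
        (Nat.card {f : Fin N → Fin N // TwoToOne f} : ℝ) =
      (∏ t ∈ Finset.range k, 1 / ((N : ℝ) - t)) *
        (∏ t ∈ Finset.range k, ((N : ℝ) - 2 * t) / ((N : ℝ) - t)) := by
  classical
  obtain ⟨f₀, hf₀⟩ := exists_twoToOne hEven
  have hne : (#{f : Fin N → Fin N | TwoToOne f} : ℝ) ≠ 0 :=
    Nat.cast_ne_zero.mpr (card_ne_zero.mpr ⟨f₀, by simpa using hf₀⟩)
  simp only [Nat.card_eq_fintype_card, Fintype.card_subtype]
  rw [show #{f | TwoToOne f ∧ ∀ j, f (i j) = y j} = #(twoToOneWith i y) by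
      unfold twoToOneWith; convert rfl,
    card_twoToOneWith hi hy, mul_div_cancel_left₀ _ hne, ← prod_mul_distrib]
  exact prod_congr rfl fun t _ => by rw [sq, ← div_div, one_div_mul_eq_div]

theorem stmt3 (N k : ℕ) (hN : 0 < N) (hEven : Even N) (hk : k ≤ N / 2)
    (i : Fin k → Fin N) (hi : Function.Injective i)
    (y : Fin k → Fin N) (hy : Function.Injective y) :
    (Nat.card {f : Fin N → Fin N // TwoToOne f ∧ ∀ j, f (i j) = y j} : ℝ) /
        (Nat.card {f : Fin N → Fin N // TwoToOne f} : ℝ) =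
      (∏ t ∈ Finset.range k, 1 / ((N : ℝ) - t)) *
        (∏ t ∈ Finset.range k, ((N : ℝ) - 2 * t) / ((N : ℝ) - t)) :=
  stmt3_general N k hEven i hi y hy
end

section
/- Let f be a partial Boolean function on D ⊆ {0,1}^M, and suppose there exist distributions D₀ and D₁ supported on the 0-inputs and 1-inputs of f respectively, which are ε-almost k-wise equivalent with ε < 1/3. Then there is no pair of nonnegative functions (a, s) such that a and s are each nonnegative linear combinations of k-terms, s(x) > 0 on D, a(x)/s(x) ≥ 2/3 whenever f(x)=1, and a(x)/s(x) ≤ 1/3 whenever f(x)=0. -/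
/-- `p` is a probability distribution on a finite type. -/
def IsProb {α : Type} [Fintype α] (p : α → ℝ) : Prop :=
  (∀ x, 0 ≤ p x) ∧ ∑ x, p x = 1

/-- The probability under `D` of the term prescribing value `v i` to
coordinate `i` for every `i ∈ T`. -/
def TermProb (M : ℕ) (D : (Fin M → Bool) → ℝ) (T : Finset (Fin M)) (v : Fin M → Bool) : ℝ :=
  ∑ x ∈ Finset.univ.filter (fun x : Fin M → Bool => ∀ i ∈ T, x i = v i), D x

/-- `a` is a nonnegative linear combination of terms with at most `k` literals each. -/
def IsKTermComb (M k : ℕ) (a : (Fin M → Bool) → ℝ) : Prop :=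
  ∃ (m : ℕ) (c : Fin m → ℝ) (T : Fin m → Finset (Fin M)) (v : Fin m → Fin M → Bool),
    (∀ j, 0 ≤ c j) ∧ (∀ j, (T j).card ≤ k) ∧
      ∀ x, a x = ∑ j, c j * (if ∀ i ∈ T j, x i = v j i then (1 : ℝ) else 0)

/-!
Average the acceptance condition over the two distributions. Expectations of nonnegative
combinations of `k`-terms are sums of term probabilities, so under `D₁` they lie within a factor
`1 ± ε` of those under `D₀`. Pointwise on the supports, `a ≥ 2/3 s` under `D₁` and `a ≤ 1/3 s`
under `D₀`, whence `2/3 (1 - ε) E₀[s] ≤ E₁[a] ≤ 1/3 (1 + ε) E₀[s]`, and `E₀[s] > 0` forces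
`ε ≥ 1/3`.
-/

open Finset

lemma termProb_const_mul (M : ℕ) (r : ℝ) (D : (Fin M → Bool) → ℝ) (T : Finset (Fin M))
    (v : Fin M → Bool) : TermProb M (fun x => r * D x) T v = r * TermProb M D T v := by
  simp only [TermProb, mul_sum]

lemma sum_mul_termComb_eq (M m : ℕ) (D : (Fin M → Bool) → ℝ) (c : Fin m → ℝ)
    (T : Fin m → Finset (Fin M)) (v : Fin m → Fin M → Bool) :
    ∑ x, D x * ∑ j, c j * (if ∀ i ∈ T j, x i = v j i then (1 : ℝ) else 0) =
      ∑ j, c j * TermProb M D (T j) (v j) := by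
  simp only [mul_sum, TermProb, sum_filter]
  rw [sum_comm]
  refine sum_congr rfl fun j _ => sum_congr rfl fun x _ => ?_
  split_ifs <;> ring

namespace IsKTermComb

variable {M k : ℕ} {g : (Fin M → Bool) → ℝ}

lemma nonneg (hg : IsKTermComb M k g) (x : Fin M → Bool) : 0 ≤ g x := by
  obtain ⟨m, c, T, v, hc, -, hg⟩ := hg
  rw [hg]
  exact sum_nonneg fun j _ => mul_nonneg (hc j) (by positivity)

lemma sum_mul_le_sum_mul (hg : IsKTermComb M k g) {P Q : (Fin M → Bool) → ℝ}
    (hPQ : ∀ T v, T.card ≤ k → TermProb M P T v ≤ TermProb M Q T v) :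
    ∑ x, P x * g x ≤ ∑ x, Q x * g x := by
  obtain ⟨m, c, T, v, hc, hT, hg⟩ := hg
  simp only [hg, sum_mul_termComb_eq]
  exact sum_le_sum fun j _ => mul_le_mul_of_nonneg_left (hPQ _ _ (hT j)) (hc j)

end IsKTermComb

lemma sum_mul_le_sum_mul_of_support {α : Type*} [Fintype α] {D a b : α → ℝ}
    (hD : ∀ x, 0 ≤ D x) (h : ∀ x, D x ≠ 0 → a x ≤ b x) :
    ∑ x, D x * a x ≤ ∑ x, D x * b x :=
  sum_le_sum fun x _ => by
    by_cases hx : D x = 0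
    · simp [hx]
    · exact mul_le_mul_of_nonneg_left (h x hx) (hD x)

lemma IsProb.sum_mul_pos {α : Type} [Fintype α] {D g : α → ℝ} (hD : IsProb D)
    (hg : ∀ x, 0 ≤ g x) (hpos : ∀ x, D x ≠ 0 → 0 < g x) : 0 < ∑ x, D x * g x := by
  obtain ⟨x₀, hx₀⟩ : ∃ x, D x ≠ 0 := by
    by_contra! h
    simpa [h] using hD.2
  exact sum_pos' (fun x _ => mul_nonneg (hD.1 x) (hg x))
    ⟨x₀, mem_univ _, mul_pos ((hD.1 x₀).lt_of_ne' hx₀) (hpos x₀ hx₀)⟩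

theorem stmt9_general (M k : ℕ) (ε : ℝ) (hε : ε < 1 / 3)
    (Dom : Set (Fin M → Bool)) (f : (Fin M → Bool) → Bool)
    (D₀ D₁ : (Fin M → Bool) → ℝ) (h₀ : IsProb D₀) (h₁ : IsProb D₁)
    (hsupp₀ : ∀ x, D₀ x ≠ 0 → x ∈ Dom ∧ f x = false)
    (hsupp₁ : ∀ x, D₁ x ≠ 0 → x ∈ Dom ∧ f x = true)
    (hequiv : ∀ (T : Finset (Fin M)) (v : Fin M → Bool), T.card ≤ k →
      (1 - ε) * TermProb M D₀ T v ≤ TermProb M D₁ T v ∧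
        TermProb M D₁ T v ≤ (1 + ε) * TermProb M D₀ T v) :
    ¬ ∃ a s : (Fin M → Bool) → ℝ, IsKTermComb M k a ∧ IsKTermComb M k s ∧
      (∀ x ∈ Dom, 0 < s x) ∧
      (∀ x ∈ Dom, f x = true → 2 / 3 ≤ a x / s x) ∧
      (∀ x ∈ Dom, f x = false → a x / s x ≤ 1 / 3) := by
  rintro ⟨a, s, ha, hs, hspos, h1, h0⟩
  have hlow : (1 - ε) * ∑ x, D₀ x * s x ≤ ∑ x, D₁ x * s x := by
    simpa only [mul_sum, mul_assoc] using hs.sum_mul_le_sum_mul (P := fun x => (1 - ε) * D₀ x)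
      fun T v hT => (termProb_const_mul M _ D₀ T v).trans_le (hequiv T v hT).1
  have hup : ∀ g, IsKTermComb M k g → ∑ x, D₁ x * g x ≤ (1 + ε) * ∑ x, D₀ x * g x :=
    fun g hg => by
      simpa only [mul_sum, mul_assoc] using hg.sum_mul_le_sum_mul (Q := fun x => (1 + ε) * D₀ x)
        fun T v hT => (hequiv T v hT).2.trans_eq (termProb_const_mul M _ D₀ T v).symm
  have hpos : 0 < ∑ x, D₀ x * s x :=
    h₀.sum_mul_pos hs.nonneg fun x hx => hspos x (hsupp₀ x hx).1
  have hacc₀ : ∑ x, D₀ x * a x ≤ ∑ x, D₀ x * (1 / 3 * s x) :=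
    sum_mul_le_sum_mul_of_support h₀.1 fun x hx => by
      obtain ⟨hxDom, hfx⟩ := hsupp₀ x hx
      exact (div_le_iff₀ (hspos x hxDom)).1 (h0 x hxDom hfx)
  have hacc₁ : ∑ x, D₁ x * (2 / 3 * s x) ≤ ∑ x, D₁ x * a x :=
    sum_mul_le_sum_mul_of_support h₁.1 fun x hx => by
      obtain ⟨hxDom, hfx⟩ := hsupp₁ x hx
      exact (le_div_iff₀ (hspos x hxDom)).1 (h1 x hxDom hfx)
  simp only [mul_left_comm (D₀ _), mul_left_comm (D₁ _), ← mul_sum] at hacc₀ hacc₁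
  have hε0 : 0 ≤ ε := by nlinarith [hup s hs]
  have hchain : 2 / 3 * ((1 - ε) * ∑ x, D₀ x * s x) ≤ (1 + ε) * (1 / 3 * ∑ x, D₀ x * s x) :=
    calc _ ≤ 2 / 3 * ∑ x, D₁ x * s x := by gcongr
      _ ≤ ∑ x, D₁ x * a x := hacc₁
      _ ≤ (1 + ε) * ∑ x, D₀ x * a x := hup a ha
      _ ≤ _ := by gcongr
  nlinarith

theorem stmt9 (M k : ℕ) (ε : ℝ) (hε0 : 0 ≤ ε) (hε : ε < 1 / 3)
    (Dom : Set (Fin M → Bool)) (f : (Fin M → Bool) → Bool)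
    (D₀ D₁ : (Fin M → Bool) → ℝ) (h₀ : IsProb D₀) (h₁ : IsProb D₁)
    (hsupp₀ : ∀ x, D₀ x ≠ 0 → x ∈ Dom ∧ f x = false)
    (hsupp₁ : ∀ x, D₁ x ≠ 0 → x ∈ Dom ∧ f x = true)
    (hequiv : ∀ (T : Finset (Fin M)) (v : Fin M → Bool), T.card ≤ k →
      (1 - ε) * TermProb M D₀ T v ≤ TermProb M D₁ T v ∧
        TermProb M D₁ T v ≤ (1 + ε) * TermProb M D₀ T v) :
    ¬ ∃ a s : (Fin M → Bool) → ℝ, IsKTermComb M k a ∧ IsKTermComb M k s ∧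
      (∀ x ∈ Dom, 0 < s x) ∧
      (∀ x ∈ Dom, f x = true → 2 / 3 ≤ a x / s x) ∧
      (∀ x ∈ Dom, f x = false → a x / s x ≤ 1 / 3) :=
  stmt9_general M k ε hε Dom f D₀ D₁ h₀ h₁ hsupp₀ hsupp₁ hequiv
end
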